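/- Let S be a minimal odd cycle transversal of a graph G and let (X, Y) be a bipartition of the bipartite graph G - S chosen so that X has maximum size. Then X is a maximal independent set of G and Y is a maximal independent set of G - X. -/

import Mathlib

/-!
A vertex with no neighbour on one side of the bipartition could be moved to that side. For a
vertex of `S` this makes `S` minus that vertex an odd cycle transversal, contradicting minimality;
for a vertex of `Y` it enlarges `X`, contradicting maximality.
-/

open SimpleGraph

namespace Paper

variable {V : Type*}

/-- `S` is an independent set of `G`. -/
def IsIndep (G : SimpleGraph V) (S : Set V) : Prop :=
  S.Pairwise fun a b => ¬ G.Adj a b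

/-- `S` is a maximal independent set of `G`. -/
def IsMaxIndep (G : SimpleGraph V) (S : Set V) : Prop :=
  IsIndep G S ∧ ∀ v ∉ S, ¬ IsIndep G (insert v S)

/-- `S` is a maximal independent set of the subgraph of `G` induced by `W`. -/
def IsMaxIndepIn (G : SimpleGraph V) (W S : Set V) : Prop :=
  S ⊆ W ∧ IsIndep G S ∧ ∀ v ∈ W, v ∉ S → ∃ w ∈ S, G.Adj v w

/-- `S` is an odd cycle transversal of `G`: deleting `S` leaves a bipartite graph. -/
def IsOCT (G : SimpleGraph V) (S : Set V) : Prop :=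
  (G.induce (Sᶜ : Set V)).Colorable 2

/-- `S` is a minimal odd cycle transversal of `G`. -/
def IsMinOCT (G : SimpleGraph V) (S : Set V) : Prop :=
  IsOCT G S ∧ ∀ T ⊂ S, ¬ IsOCT G T

/-- `S` is a feedback vertex set of `G`: deleting `S` leaves a forest. -/
def IsFVS (G : SimpleGraph V) (S : Set V) : Prop :=
  (G.induce (Sᶜ : Set V)).IsAcyclic

/-- `S` is a minimal feedback vertex set of `G`. -/
def IsMinFVS (G : SimpleGraph V) (S : Set V) : Prop :=
  IsFVS G S ∧ ∀ T ⊂ S, ¬ IsFVS G T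

/-- `S` is a vertex cover of `G`. -/
def IsVC (G : SimpleGraph V) (S : Set V) : Prop :=
  ∀ ⦃a b⦄, G.Adj a b → a ∈ S ∨ b ∈ S

/-- `S` induces a connected subgraph of `G`. -/
def ConnSet (G : SimpleGraph V) (S : Set V) : Prop :=
  (G.induce S).Connected

/-- The graph `sP₂`: the disjoint union of `s` copies of an edge. -/
def sP2 (s : ℕ) : SimpleGraph (Fin s × Fin 2) where
  Adj p q := p.1 = q.1 ∧ p.2 ≠ q.2
  symm := ⟨by intro _ _ h; exact ⟨h.1.symm, h.2.symm⟩⟩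
  loopless := ⟨by intro _ h; exact h.2 rfl⟩

/-- `G` contains an induced subgraph isomorphic to `H`. -/
def HasInducedIso {W : Type*} (G : SimpleGraph V) (H : SimpleGraph W) : Prop :=
  ∃ T : Set V, Nonempty (G.induce T ≃g H)

/-- `G` is `sP₂`-free. -/
def sP2Free (s : ℕ) (G : SimpleGraph V) : Prop :=
  ¬ HasInducedIso G (sP2 s)

/-- `G` is claw-free: it has no induced `K_{1,3}`. -/
def ClawFree (G : SimpleGraph V) : Prop :=
  ¬ HasInducedIso G (completeBipartiteGraph (Fin 1) (Fin 3))

/-- `G` has an even cycle factor: a spanning 2-regular subgraph with no odd cycle. -/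
def HasEvenCycleFactor (G : SimpleGraph V) : Prop :=
  ∃ H : SimpleGraph V, H ≤ G ∧ (∀ v, (H.neighborSet v).ncard = 2) ∧ H.Colorable 2

/-- The number of neighbours of `v` inside the set `F`. -/
noncomputable def degIn (G : SimpleGraph V) (F : Set V) (v : V) : ℕ :=
  {w | w ∈ F ∧ G.Adj v w}.ncard

/-- `{x, y}` is a component of `G[F]` isomorphic to `P₂`. -/
def IsP2Comp (G : SimpleGraph V) (F : Set V) (x y : V) : Prop :=
  x ∈ F ∧ y ∈ F ∧ G.Adj x y ∧
  (∀ w ∈ F, G.Adj x w → w = y) ∧ (∀ w ∈ F, G.Adj y w → w = x)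

/-- `F'` is a skeleton of the forest `G[F]`: all vertices of degree at least 2 in `G[F]`
together with exactly one vertex from each `P₂`-component. -/
def IsSkeleton (G : SimpleGraph V) (F F' : Set V) : Prop :=
  F' ⊆ F ∧ (∀ v ∈ F, 2 ≤ degIn G F v → v ∈ F') ∧
  (∀ v ∈ F', 2 ≤ degIn G F v ∨ ∃ y, IsP2Comp G F v y) ∧
  (∀ x y, IsP2Comp G F x y → (x ∈ F' ↔ y ∉ F'))

/-- A bipartition `(X, Y)` of the subgraph of `G` induced by the vertex set `W`. -/
def IsBipartitionOf (G : SimpleGraph V) (W X Y : Set V) : Prop :=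
  X ∪ Y = W ∧ Disjoint X Y ∧ IsIndep G X ∧ IsIndep G Y

lemma IsIndep.insert {G : SimpleGraph V} {X : Set V} {v : V} (hX : IsIndep G X)
    (hv : ∀ w ∈ X, ¬ G.Adj v w) : IsIndep G (insert v X) :=
  Set.Pairwise.insert hX fun w hw _ => ⟨hv w hw, fun h => hv w hw h.symm⟩

lemma IsIndep.isMaxIndep_of_forall_exists_adj {G : SimpleGraph V} {X : Set V} (hX : IsIndep G X)
    (h : ∀ v ∉ X, ∃ w ∈ X, G.Adj v w) : IsMaxIndep G X := by
  refine ⟨hX, fun v hv hind => ?_⟩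
  obtain ⟨w, hw, hvw⟩ := h v hv
  exact hind (Set.mem_insert v X) (Set.mem_insert_of_mem v hw) (fun h => hv (h ▸ hw)) hvw

lemma colorable_induce_of_subset_union {G : SimpleGraph V} {W X Y : Set V}
    (hX : IsIndep G X) (hY : IsIndep G Y) (hW : W ⊆ X ∪ Y) : (G.induce W).Colorable 2 := by
  classical
  refine ⟨Coloring.mk (fun w => if (w : V) ∈ X then 0 else 1) ?_⟩
  rintro ⟨a, ha⟩ ⟨b, hb⟩ (hab : G.Adj a b)
  by_cases haX : a ∈ X <;> by_cases hbX : b ∈ X <;> simp only [haX, hbX, if_true, if_false]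
  · exact (hX haX hbX hab.ne hab).elim
  · decide
  · decide
  · exact (hY ((hW ha).resolve_left haX) ((hW hb).resolve_left hbX) hab.ne hab).elim

namespace IsBipartitionOf

variable {G : SimpleGraph V} {W X Y : Set V}

lemma symm (h : IsBipartitionOf G W X Y) : IsBipartitionOf G W Y X :=
  ⟨Set.union_comm X Y ▸ h.1, h.2.1.symm, h.2.2.2, h.2.2.1⟩

lemma right_subset_compl_left (h : IsBipartitionOf G W X Y) : Y ⊆ Xᶜ :=
  h.2.1.subset_compl_left

lemma move_right_to_left (h : IsBipartitionOf G W X Y) {v : V} (hvY : v ∈ Y)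
    (hv : ∀ w ∈ X, ¬ G.Adj v w) : IsBipartitionOf G W (insert v X) (Y \ {v}) := by
  obtain ⟨hunion, hdisj, hXind, hYind⟩ := h
  refine ⟨?_, ?_, hXind.insert hv, hYind.mono Set.sdiff_subset⟩
  · rw [← hunion, Set.insert_union, ← Set.union_insert, Set.insert_sdiff_singleton,
      Set.insert_eq_of_mem hvY]
  · rw [Set.disjoint_insert_left]
    exact ⟨fun h => h.2 rfl, hdisj.mono_right Set.sdiff_subset⟩

lemma exists_adj_of_mem_right (h : IsBipartitionOf G W X Y) (hX : X.Finite)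
    (hmax : ∀ X' Y' : Set V, IsBipartitionOf G W X' Y' → X'.ncard ≤ X.ncard) {v : V}
    (hvY : v ∈ Y) : ∃ w ∈ X, G.Adj v w := by
  by_contra! hv
  have hvX : v ∉ X := fun hvX => h.2.1.ne_of_mem hvX hvY rfl
  have := hmax _ _ (h.move_right_to_left hvY hv)
  rw [Set.ncard_insert_of_notMem hvX hX] at this
  omega

end IsBipartitionOf

namespace IsMinOCT

variable {G : SimpleGraph V} {S X Y : Set V}

lemma exists_adj_left (hS : IsMinOCT G S) (hXY : IsBipartitionOf G Sᶜ X Y) {v : V}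
    (hvS : v ∈ S) : ∃ w ∈ X, G.Adj v w := by
  obtain ⟨hunion, -, hXind, hYind⟩ := hXY
  by_contra! hv
  refine hS.2 (S \ {v}) (Set.sdiff_singleton_ssubset.mpr hvS) ?_
  refine colorable_induce_of_subset_union (hXind.insert hv) hYind fun a ha => ?_
  by_cases hav : a = v
  · exact Or.inl (hav ▸ Set.mem_insert v X)
  · have haXY : a ∈ X ∪ Y := hunion ▸ fun haS => ha ⟨haS, hav⟩
    exact haXY.imp_left (Set.mem_insert_of_mem v)

lemma exists_adj_right (hS : IsMinOCT G S) (hXY : IsBipartitionOf G Sᶜ X Y) {v : V}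
    (hvS : v ∈ S) : ∃ w ∈ Y, G.Adj v w :=
  hS.exists_adj_left hXY.symm hvS

end IsMinOCT

/-- If `S` is a minimal odd cycle transversal of `G` and `(X, Y)` is a bipartition
of `G - S` with `X` of maximum size, then `X` is a maximal independent set of `G` and `Y` is a
maximal independent set of `G - X`. -/
theorem min_oct_bipartition_max_indep {V : Type*} [Fintype V] (G : SimpleGraph V) (S : Set V)
    (hS : IsMinOCT G S) (X Y : Set V) (hXY : IsBipartitionOf G (Sᶜ : Set V) X Y)
    (hmax : ∀ X' Y' : Set V, IsBipartitionOf G (Sᶜ : Set V) X' Y' → X'.ncard ≤ X.ncard) :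
    IsMaxIndep G X ∧ IsMaxIndepIn G (Xᶜ : Set V) Y := by
  have hmem : ∀ v ∉ X ∪ Y, v ∈ S := fun v hv => by_contra fun hvS => hv (hXY.1 ▸ hvS)
  refine ⟨hXY.2.2.1.isMaxIndep_of_forall_exists_adj fun v hvX => ?_,
    hXY.right_subset_compl_left, hXY.2.2.2, fun v hvX hvY => ?_⟩
  · by_cases hvY : v ∈ Y
    · exact hXY.exists_adj_of_mem_right (Set.toFinite X) hmax hvY
    · exact hS.exists_adj_left hXY (hmem v fun h => h.elim hvX hvY)
  · exact hS.exists_adj_right hXY (hmem v fun h => h.elim hvX hvY)
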